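/- Let K ∈ ℕ and N ≥ 1, and let x̄ ∈ ℝ^S and an alphabet x̄₁, …, x̄_N ∈ ℝ^S be given, with average μ̄ := (1/N) Σ_{s=1}^{N} x̄_s. Let N₀, …, N_K : Ω → ℝ^S be square-integrable random vectors each with mean μ_TX and covariance C_TX, let S₁, …, S_K : Ω → Fin N be random variables with P(S_κ = s) = 1/N for all s, and suppose the family (N₀, …, N_K, S₁, …, S_K) is mutually independent. Define X₀ := x̄ + N₀ and X_κ := x̄_{S_κ} + N_κ for κ ≥ 1, and let H₀, …, H_K be S×S real matrices. Then Y := Σ_{κ=0}^{K} H_κ · X_κ satisfies E[Y] = H₀ · x̄ + Σ_{κ=1}^{K} H_κ · μ̄ + Σ_{κ=0}^{K} H_κ · μ_TX and Cov[Y] = Σ_{κ=0}^{K} H_κ · C_TX · H_κᵀ + Σ_{κ=1}^{K} H_κ · ( (1/N) Σ_{s=1}^{N} (x̄_s − μ̄)(x̄_s − μ̄)ᵀ ) · H_κᵀ. (Paper's Corollary to Proposition 3 for signal-independent Gaussian-type noise, eqs. (18a)–(18b): the covariance splits into a transmitter-noise part and a symbol-uncertainty part.) -/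

import Mathlib

/-!
Write `Y = H₀ x̄ + ∑ₗ Mₗ Xₗ`, where `Xₗ` runs over the noises `N_κ` and the transmitted past
symbols `x̄_{S_κ}`, which are mutually independent. The mean is linear, the covariance of a sum of
independent square-integrable vectors is the sum of their covariances, and
`Cov[M X] = M Cov[X] Mᵀ`. A uniform symbol `x̄_{S_κ}` has mean `μ̄` and covariance
`(1/N) ∑ₛ (x̄ₛ − μ̄)(x̄ₛ − μ̄)ᵀ`.

The symbols `S_κ` are not assumed measurable. Finitely many disjoint fibers whose outer measures
add up to at most the total mass are null-measurable, though: each one is squeezed between its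
measurable hull and the complement of the other hulls. So `S_κ` is a.e.-measurable.
-/

open MeasureTheory ProbabilityTheory Matrix

/-- The mean of a random vector, taken componentwise. -/
noncomputable def vmean {Ω : Type*} [MeasurableSpace Ω] {d : ℕ}
    (P : Measure Ω) (X : Ω → Fin d → ℝ) : Fin d → ℝ :=
  fun i => ∫ ω, X ω i ∂P

/-- The covariance matrix of a random vector. -/
noncomputable def vcov {Ω : Type*} [MeasurableSpace Ω] {d : ℕ}
    (P : Measure Ω) (X : Ω → Fin d → ℝ) : Matrix (Fin d) (Fin d) ℝ :=
  Matrix.of fun i j => ∫ ω, (X ω i - vmean P X i) * (X ω j - vmean P X j) ∂P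

section Moments

variable {Ω : Type*} [MeasurableSpace Ω] {P : Measure Ω} {d e : ℕ}

lemma vcov_apply (X : Ω → Fin d → ℝ) (i j : Fin d) :
    vcov P X i j = cov[fun ω => X ω i, fun ω => X ω j; P] := rfl

lemma memLp_mulVec_apply {p : ENNReal} (M : Matrix (Fin e) (Fin d) ℝ) {X : Ω → Fin d → ℝ}
    (hX : ∀ i, MemLp (fun ω => X ω i) p P) (i : Fin e) :
    MemLp (fun ω => (M *ᵥ X ω) i) p P :=
  memLp_finsetSum Finset.univ fun a _ => (hX a).const_mul (M i a)

lemma vmean_const_add [IsProbabilityMeasure P] (c : Fin d → ℝ) {X : Ω → Fin d → ℝ}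
    (hX : ∀ i, Integrable (fun ω => X ω i) P) :
    vmean P (fun ω => c + X ω) = c + vmean P X := by
  funext i
  simp [vmean, integral_add (integrable_const _) (hX i)]

lemma vmean_sum {ι : Type*} [Fintype ι] (X : ι → Ω → Fin d → ℝ)
    (hX : ∀ l i, Integrable (fun ω => X l ω i) P) :
    vmean P (fun ω => ∑ l, X l ω) = ∑ l, vmean P (X l) := by
  funext i
  simp only [vmean, Finset.sum_apply]
  exact integral_finsetSum _ fun l _ => hX l i

lemma vmean_mulVec (M : Matrix (Fin e) (Fin d) ℝ) {X : Ω → Fin d → ℝ}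
    (hX : ∀ i, Integrable (fun ω => X ω i) P) :
    vmean P (fun ω => M *ᵥ X ω) = M *ᵥ vmean P X := by
  funext i
  simp only [vmean, mulVec, dotProduct]
  rw [integral_finsetSum _ fun a _ => (hX a).const_mul (M i a)]
  simp only [integral_const_mul]

lemma vcov_const_add [IsProbabilityMeasure P] (c : Fin d → ℝ) {X : Ω → Fin d → ℝ}
    (hX : ∀ i, Integrable (fun ω => X ω i) P) :
    vcov P (fun ω => c + X ω) = vcov P X := by
  ext i j
  simp only [vcov_apply, Pi.add_apply]
  rw [covariance_const_add_left (hX i), covariance_const_add_right (hX j)]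

lemma vcov_mulVec [IsFiniteMeasure P] (M : Matrix (Fin e) (Fin d) ℝ) {X : Ω → Fin d → ℝ}
    (hX : ∀ i, MemLp (fun ω => X ω i) 2 P) :
    vcov P (fun ω => M *ᵥ X ω) = M * vcov P X * Mᵀ := by
  ext i j
  simp only [vcov_apply, mulVec, dotProduct]
  rw [covariance_fun_sum_fun_sum (fun a => (hX a).const_mul (M i a))
    (fun b => (hX b).const_mul (M j b))]
  simp only [covariance_const_mul_left, covariance_const_mul_right, mul_apply, transpose_apply,
    Finset.sum_mul, vcov_apply]
  rw [Finset.sum_comm]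
  exact Finset.sum_congr rfl fun a _ => Finset.sum_congr rfl fun b _ => by ring

lemma vcov_sum_of_pairwise_indepFun [IsFiniteMeasure P] {ι : Type*} [Fintype ι]
    (X : ι → Ω → Fin d → ℝ) (hX : ∀ l i, MemLp (fun ω => X l ω i) 2 P)
    (hindep : Pairwise fun l l' => IndepFun (X l) (X l') P) :
    vcov P (fun ω => ∑ l, X l ω) = ∑ l, vcov P (X l) := by
  classical
  ext i j
  simp only [vcov_apply, Finset.sum_apply, Matrix.sum_apply]
  rw [covariance_fun_sum_fun_sum (fun l => hX l i) (fun l => hX l j)]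
  refine Finset.sum_congr rfl fun l _ => Finset.sum_eq_single l (fun l' _ hne => ?_) (by simp)
  exact ((hindep hne.symm).comp (measurable_pi_apply i) (measurable_pi_apply j)).covariance_eq_zero
    (hX l i) (hX l' j)

lemma ProbabilityTheory.IndepFun.mulVec {X Y : Ω → Fin d → ℝ} (h : IndepFun X Y P)
    (M N : Matrix (Fin e) (Fin d) ℝ) :
    IndepFun (fun ω => M *ᵥ X ω) (fun ω => N *ᵥ Y ω) P :=
  h.comp (φ := (M *ᵥ ·)) (ψ := (N *ᵥ ·)) (by fun_prop) (by fun_prop)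

lemma vmean_const_add_sum_mulVec [IsProbabilityMeasure P] {ι : Type*} [Fintype ι]
    (c : Fin e → ℝ) (M : ι → Matrix (Fin e) (Fin d) ℝ) (X : ι → Ω → Fin d → ℝ)
    (hX : ∀ l i, Integrable (fun ω => X l ω i) P) :
    vmean P (fun ω => c + ∑ l, M l *ᵥ X l ω) = c + ∑ l, M l *ᵥ vmean P (X l) := by
  have hMX : ∀ l i, Integrable (fun ω => (M l *ᵥ X l ω) i) P := fun l i =>
    integrable_finsetSum Finset.univ fun a _ => (hX l a).const_mul (M l i a)
  have hsum : ∀ i, Integrable (fun ω => (∑ l, M l *ᵥ X l ω) i) P := fun i => by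
    simpa only [Finset.sum_apply] using integrable_finsetSum _ fun l _ => hMX l i
  rw [vmean_const_add _ hsum, vmean_sum _ hMX]
  simp only [vmean_mulVec _ (hX _)]

lemma vcov_const_add_sum_mulVec [IsProbabilityMeasure P] {ι : Type*} [Fintype ι]
    (c : Fin e → ℝ) (M : ι → Matrix (Fin e) (Fin d) ℝ) (X : ι → Ω → Fin d → ℝ)
    (hX : ∀ l i, MemLp (fun ω => X l ω i) 2 P)
    (hindep : Pairwise fun l l' => IndepFun (X l) (X l') P) :
    vcov P (fun ω => c + ∑ l, M l *ᵥ X l ω) = ∑ l, M l * vcov P (X l) * (M l)ᵀ := by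
  have hMX : ∀ l i, MemLp (fun ω => (M l *ᵥ X l ω) i) 2 P := fun l =>
    memLp_mulVec_apply (M l) (hX l)
  have hsum : ∀ i, Integrable (fun ω => (∑ l, M l *ᵥ X l ω) i) P := fun i => by
    simpa only [Finset.sum_apply] using
      integrable_finsetSum _ fun l _ => (hMX l i).integrable one_le_two
  rw [vcov_const_add _ hsum, vcov_sum_of_pairwise_indepFun _ hMX fun l l' hne =>
    (hindep hne).mulVec _ _]
  simp only [vcov_mulVec _ (hX _)]

end Moments

section FiniteValued

variable {Ω ι : Type*} [MeasurableSpace Ω] {P : Measure Ω} [Fintype ι]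

lemma nullMeasurableSet_fiber_of_sum_measure_fiber_le [IsFiniteMeasure P] (f : Ω → ι)
    (hf : ∑ i, P {ω | f ω = i} ≤ P Set.univ) (i : ι) :
    NullMeasurableSet {ω | f ω = i} P := by
  classical
  set T : ι → Set Ω := fun j => toMeasurable P {ω | f ω = j}
  set U : Set Ω := ⋃ j ∈ Finset.univ.erase i, T j
  have hU : MeasurableSet U :=
    Finset.measurableSet_biUnion _ fun j _ => measurableSet_toMeasurable _ _
  have hUc_sub : Uᶜ ⊆ {ω | f ω = i} := by
    intro ω hω
    by_contra hne
    exact hω (Set.mem_biUnion (Finset.mem_erase.2 ⟨hne, Finset.mem_univ _⟩)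
      (subset_toMeasurable P _ rfl))
  have hle : P (T i) ≤ P Uᶜ := by
    have : P (T i) + P U ≤ P Uᶜ + P U := calc
      P (T i) + P U ≤ P {ω | f ω = i} + ∑ j ∈ Finset.univ.erase i, P {ω | f ω = j} := by
        rw [measure_toMeasurable]
        gcongr
        exact (measure_biUnion_finset_le _ _).trans
          (Finset.sum_le_sum fun j _ => (measure_toMeasurable _).le)
      _ = ∑ j, P {ω | f ω = j} :=
        Finset.add_sum_erase _ (fun j => P {ω | f ω = j}) (Finset.mem_univ i)
      _ ≤ P Set.univ := hf
      _ = P Uᶜ + P U := by rw [add_comm, measure_add_measure_compl hU]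
    exact (ENNReal.add_le_add_iff_right (measure_ne_top P U)).1 this
  have hae : Uᶜ =ᵐ[P] T i :=
    ae_eq_of_subset_of_measure_ge (hUc_sub.trans (subset_toMeasurable P _)) hle
      hU.compl.nullMeasurableSet (measure_ne_top P _)
  refine (measurableSet_toMeasurable P {ω | f ω = i}).nullMeasurableSet.congr ?_
  exact (hae.symm.le.trans hUc_sub.eventuallyLE).antisymm
    (subset_toMeasurable P _).eventuallyLE

lemma aemeasurable_of_sum_measure_fiber_le [IsFiniteMeasure P] [MeasurableSpace ι]
    [DiscreteMeasurableSpace ι] (f : Ω → ι) (hf : ∑ i, P {ω | f ω = i} ≤ P Set.univ) :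
    AEMeasurable f P :=
  NullMeasurable.aemeasurable <| measurable_to_countable' fun i =>
    nullMeasurableSet_fiber_of_sum_measure_fiber_le f hf i

end FiniteValued

section Uniform

variable {Ω ι : Type*} [MeasurableSpace Ω] {P : Measure Ω} [IsProbabilityMeasure P]
  [Fintype ι] [MeasurableSpace ι] [DiscreteMeasurableSpace ι] {f : Ω → ι}
  {E : Type*} [NormedAddCommGroup E] {d : ℕ}

lemma aemeasurable_of_measure_fiber_eq_inv_card
    (hf : ∀ i, P {ω | f ω = i} = (Fintype.card ι : ENNReal)⁻¹) : AEMeasurable f P := by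
  refine aemeasurable_of_sum_measure_fiber_le f ?_
  simp only [hf, Finset.sum_const, Finset.card_univ, nsmul_eq_mul, measure_univ]
  exact ENNReal.mul_inv_le_one _

lemma memLp_comp_of_measure_fiber_eq_inv_card
    (hf : ∀ i, P {ω | f ω = i} = (Fintype.card ι : ENNReal)⁻¹) (F : ι → E) (p : ENNReal) :
    MemLp (fun ω => F (f ω)) p P :=
  MemLp.of_discrete.comp_of_map (aemeasurable_of_measure_fiber_eq_inv_card hf)

lemma integral_comp_of_measure_fiber_eq_inv_card [NormedSpace ℝ E] [CompleteSpace E]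
    (hf : ∀ i, P {ω | f ω = i} = (Fintype.card ι : ENNReal)⁻¹) (F : ι → E) :
    ∫ ω, F (f ω) ∂P = (Fintype.card ι : ℝ)⁻¹ • ∑ i, F i := by
  have hfm := aemeasurable_of_measure_fiber_eq_inv_card hf
  rw [← integral_map hfm (by fun_prop), integral_fintype .of_finite, Finset.smul_sum]
  refine Finset.sum_congr rfl fun i _ => ?_
  rw [measureReal_def, Measure.map_apply_of_aemeasurable hfm (measurableSet_singleton i)]
  change (P {ω | f ω = i}).toReal • F i = _
  rw [hf i]
  simp [ENNReal.toReal_inv]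

lemma vmean_comp_of_measure_fiber_eq_inv_card
    (hf : ∀ i, P {ω | f ω = i} = (Fintype.card ι : ENNReal)⁻¹) (v : ι → Fin d → ℝ) :
    vmean P (fun ω => v (f ω)) = (Fintype.card ι : ℝ)⁻¹ • ∑ i, v i := by
  funext a
  simp only [vmean, integral_comp_of_measure_fiber_eq_inv_card hf (fun i => v i a),
    Pi.smul_apply, Finset.sum_apply]

lemma vcov_comp_of_measure_fiber_eq_inv_card
    (hf : ∀ i, P {ω | f ω = i} = (Fintype.card ι : ENNReal)⁻¹) (v : ι → Fin d → ℝ) :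
    vcov P (fun ω => v (f ω)) =
      (Fintype.card ι : ℝ)⁻¹ • ∑ i,
        vecMulVec (v i - (Fintype.card ι : ℝ)⁻¹ • ∑ t, v t)
          (v i - (Fintype.card ι : ℝ)⁻¹ • ∑ t, v t) := by
  ext a b
  simp only [vcov, of_apply, vmean_comp_of_measure_fiber_eq_inv_card hf,
    integral_comp_of_measure_fiber_eq_inv_card hf
      (fun i => (v i a - ((Fintype.card ι : ℝ)⁻¹ • ∑ t, v t) a) *
        (v i b - ((Fintype.card ι : ℝ)⁻¹ • ∑ t, v t) b)),
    Matrix.smul_apply, Matrix.sum_apply, vecMulVec_apply, Pi.sub_apply, smul_eq_mul]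

end Uniform

lemma ProbabilityTheory.iIndepFun.pairwise_indepFun_sumElim_comp.{u}
    {Ω ι κ : Type*} {α β : Type u} [MeasurableSpace Ω] {P : Measure Ω} [MeasurableSpace α] [MeasurableSpace β]
    {f : ι → Ω → α} {g : κ → Ω → β}
    (h : iIndepFun (β := Sum.elim (fun _ : ι => α) (fun _ : κ => β))
      (m := fun i => Sum.rec (fun _ => (inferInstance : MeasurableSpace α))
        (fun _ => (inferInstance : MeasurableSpace β)) i)
      (fun i => Sum.rec (fun i => f i) (fun j => g j) i) P)
    {φ : β → α} (hφ : Measurable φ) :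
    Pairwise fun l l' => IndepFun (Sum.elim f (fun j ω => φ (g j ω)) l)
      (Sum.elim f (fun j ω => φ (g j ω)) l') P := by
  have hcomp := h.comp (γ := fun _ => α)
    (fun l => Sum.rec (motive := fun l => Sum.elim (fun _ => α) (fun _ => β) l → α)
      (fun _ => id) (fun _ => φ) l)
    (by rintro (i | j); exacts [measurable_id, hφ])
  intro l l' hne
  have := hcomp.indepFun hne
  rcases l with i | j <;> rcases l' with i' | j' <;> exact this

theorem moments_signal_independent_noise_uniform_past_symbols_general
    {Ω : Type*} [MeasurableSpace Ω] (P : Measure Ω) [IsProbabilityMeasure P]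
    {S K N : ℕ}
    (xbar : Fin S → ℝ) (alphabet : Fin N → Fin S → ℝ)
    (Noise : Fin (K + 1) → Ω → Fin S → ℝ)
    (hNoise2 : ∀ κ, ∀ i, MemLp (fun ω => Noise κ ω i) 2 P)
    (μTX : Fin S → ℝ) (CTX : Matrix (Fin S) (Fin S) ℝ)
    (hNoiseMean : ∀ κ, vmean P (Noise κ) = μTX)
    (hNoiseCov : ∀ κ, vcov P (Noise κ) = CTX)
    (Sig : Fin K → Ω → Fin N)
    (hSigUnif : ∀ κ, ∀ s, P {ω | Sig κ ω = s} = (N : ENNReal)⁻¹)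
    (hindep : iIndepFun
      (β := Sum.elim (fun _ : Fin (K + 1) => Fin S → ℝ) (fun _ : Fin K => Fin N))
      (m := fun i => Sum.rec (fun _ => (inferInstance : MeasurableSpace (Fin S → ℝ)))
        (fun _ => (inferInstance : MeasurableSpace (Fin N))) i)
      (fun i => Sum.rec (fun κ => Noise κ) (fun κ => Sig κ) i) P)
    (H : Fin (K + 1) → Matrix (Fin S) (Fin S) ℝ) :
    vmean P (fun ω => (H 0).mulVec (xbar + Noise 0 ω) +
          ∑ κ : Fin K, (H κ.succ).mulVec (alphabet (Sig κ ω) + Noise κ.succ ω)) =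
        (H 0).mulVec xbar +
          ∑ κ : Fin K, (H κ.succ).mulVec ((N : ℝ)⁻¹ • ∑ s, alphabet s) +
          ∑ κ : Fin (K + 1), (H κ).mulVec μTX ∧
      vcov P (fun ω => (H 0).mulVec (xbar + Noise 0 ω) +
          ∑ κ : Fin K, (H κ.succ).mulVec (alphabet (Sig κ ω) + Noise κ.succ ω)) =
        ∑ κ : Fin (K + 1), H κ * CTX * (H κ)ᵀ +
          ∑ κ : Fin K,
            H κ.succ *
              ((N : ℝ)⁻¹ • ∑ s,
                Matrix.vecMulVec (alphabet s - (N : ℝ)⁻¹ • ∑ t, alphabet t)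
                  (alphabet s - (N : ℝ)⁻¹ • ∑ t, alphabet t)) *
              (H κ.succ)ᵀ := by
  have hSig : ∀ κ s, P {ω | Sig κ ω = s} = (Fintype.card (Fin N) : ENNReal)⁻¹ := by
    simpa using hSigUnif
  set X : Fin (K + 1) ⊕ Fin K → Ω → Fin S → ℝ :=
    Sum.elim Noise (fun κ ω => alphabet (Sig κ ω)) with hX
  set M : Fin (K + 1) ⊕ Fin K → Matrix (Fin S) (Fin S) ℝ :=
    Sum.elim H (fun κ => H κ.succ) with hM
  have hXmem : ∀ l i, MemLp (fun ω => X l ω i) 2 P := by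
    rintro (κ | κ) i
    exacts [hNoise2 κ i, memLp_comp_of_measure_fiber_eq_inv_card (hSig κ) (alphabet · i) 2]
  have hY : (fun ω => (H 0).mulVec (xbar + Noise 0 ω) +
      ∑ κ : Fin K, (H κ.succ).mulVec (alphabet (Sig κ ω) + Noise κ.succ ω)) =
      fun ω => (H 0).mulVec xbar + ∑ l, M l *ᵥ X l ω := by
    funext ω
    simp only [Fintype.sum_sum_type, hM, hX, Sum.elim_inl, Sum.elim_inr, Fin.sum_univ_succ,
      mulVec_add, Finset.sum_add_distrib]
    abel
  rw [hY, vmean_const_add_sum_mulVec _ _ _ fun l i => (hXmem l i).integrable one_le_two,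
    vcov_const_add_sum_mulVec _ _ _ hXmem
      (hindep.pairwise_indepFun_sumElim_comp (measurable_of_finite alphabet))]
  refine ⟨?_, ?_⟩ <;> simp only [Fintype.sum_sum_type, hM, hX, Sum.elim_inl, Sum.elim_inr,
    hNoiseMean, hNoiseCov, vmean_comp_of_measure_fiber_eq_inv_card (hSig _),
    vcov_comp_of_measure_fiber_eq_inv_card (hSig _), Fintype.card_fin]
  abel

/-- Corollary to Proposition 3 (signal-independent Gaussian-type noise), eqs. (18a)–(18b):
with a fixed current mixture `x̄`, a mixture alphabet `x̄₁, …, x̄_N` with average `μ̄`,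
mutually independent noises `N₀, …, N_K` (mean `μ_TX`, covariance `C_TX`) and uniformly
distributed past symbols `S₁, …, S_K`, the received vector
`Y = H₀ (x̄ + N₀) + Σ_{κ≥1} H_κ (x̄_{S_κ} + N_κ)` has mean
`H₀ x̄ + Σ_{κ≥1} H_κ μ̄ + Σ_κ H_κ μ_TX` and its covariance splits into a TX-noise part
`Σ_κ H_κ C_TX H_κᵀ` and a symbol-uncertainty part
`Σ_{κ≥1} H_κ ((1/N) Σ_s (x̄_s − μ̄)(x̄_s − μ̄)ᵀ) H_κᵀ`. -/
theorem moments_signal_independent_noise_uniform_past_symbols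
    {Ω : Type*} [MeasurableSpace Ω] (P : Measure Ω) [IsProbabilityMeasure P]
    {S K N : ℕ} (hN : 1 ≤ N)
    (xbar : Fin S → ℝ) (alphabet : Fin N → Fin S → ℝ)
    (Noise : Fin (K + 1) → Ω → Fin S → ℝ)
    (hNoise2 : ∀ κ, ∀ i, MemLp (fun ω => Noise κ ω i) 2 P)
    (μTX : Fin S → ℝ) (CTX : Matrix (Fin S) (Fin S) ℝ)
    (hNoiseMean : ∀ κ, vmean P (Noise κ) = μTX)
    (hNoiseCov : ∀ κ, vcov P (Noise κ) = CTX)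
    (Sig : Fin K → Ω → Fin N)
    (hSigUnif : ∀ κ, ∀ s, P {ω | Sig κ ω = s} = (N : ENNReal)⁻¹)
    (hindep : iIndepFun
      (β := Sum.elim (fun _ : Fin (K + 1) => Fin S → ℝ) (fun _ : Fin K => Fin N))
      (m := fun i => Sum.rec (fun _ => (inferInstance : MeasurableSpace (Fin S → ℝ)))
        (fun _ => (inferInstance : MeasurableSpace (Fin N))) i)
      (fun i => Sum.rec (fun κ => Noise κ) (fun κ => Sig κ) i) P)
    (H : Fin (K + 1) → Matrix (Fin S) (Fin S) ℝ) :
    vmean P (fun ω => (H 0).mulVec (xbar + Noise 0 ω) +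
          ∑ κ : Fin K, (H κ.succ).mulVec (alphabet (Sig κ ω) + Noise κ.succ ω)) =
        (H 0).mulVec xbar +
          ∑ κ : Fin K, (H κ.succ).mulVec ((N : ℝ)⁻¹ • ∑ s, alphabet s) +
          ∑ κ : Fin (K + 1), (H κ).mulVec μTX ∧
      vcov P (fun ω => (H 0).mulVec (xbar + Noise 0 ω) +
          ∑ κ : Fin K, (H κ.succ).mulVec (alphabet (Sig κ ω) + Noise κ.succ ω)) =
        ∑ κ : Fin (K + 1), H κ * CTX * (H κ)ᵀ +
          ∑ κ : Fin K,
            H κ.succ *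
              ((N : ℝ)⁻¹ • ∑ s,
                Matrix.vecMulVec (alphabet s - (N : ℝ)⁻¹ • ∑ t, alphabet t)
                  (alphabet s - (N : ℝ)⁻¹ • ∑ t, alphabet t)) *
              (H κ.succ)ᵀ :=
  moments_signal_independent_noise_uniform_past_symbols_general P xbar alphabet Noise hNoise2 μTX
    CTX hNoiseMean hNoiseCov Sig hSigUnif hindep H
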